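/- arXiv:1703.07986 — 5 statements merged into one kernel-verified Lean document; each statement's English description precedes it below -/
import Mathlib

section
/- Let (X,A) be a pair of a normal space X and a closed subset A. Call a border cover α = {α_v}_{v∈(V_α, V_α^A)} of (X,A) proper if V_α^A equals exactly the set of indices v ∈ V_α with α_v ∩ A ≠ ∅. Then the proper border covers are cofinal in cov_∞(X,A): for every border cover α of (X,A) there exists a proper border cover β of (X,A) refining α. -/
/-- A border cover of the closed pair `(X, A)`: a finite indexed open family with a
distinguished index subset, for which there exists a compact set `K ⊆ X` with
`X \ K = ⋃ v, sets v` and `A \ K ⊆ ⋃ v ∈ distinguished, sets v`. -/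
structure BorderCoverPair (X : Type*) [TopologicalSpace X] (A : Set X) where
  ι : Type
  fin : Finite ι
  distinguished : Set ι
  sets : ι → Set X
  opens : ∀ v, IsOpen (sets v)
  K : Set X
  compact_K : IsCompact K
  compl_K_eq : Kᶜ = ⋃ v, sets v
  diff_subset : A \ K ⊆ ⋃ v ∈ distinguished, sets v

/-- `β` refines `α`: there is a refinement projection function of the indexing pairs
with `β v ⊆ α (p v)` for every index. -/
def BorderCoverPair.Refines {X : Type*} [TopologicalSpace X] {A : Set X}
    (β α : BorderCoverPair X A) : Prop :=
  ∃ p : β.ι → α.ι, (∀ v ∈ β.distinguished, p v ∈ α.distinguished) ∧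
    ∀ v, β.sets v ⊆ α.sets (p v)

/-- A border cover of `(X,A)` is proper if the distinguished index set is exactly the set of
indices whose set meets `A`. -/
def BorderCoverPair.Proper {X : Type*} [TopologicalSpace X] {A : Set X}
    (α : BorderCoverPair X A) : Prop :=
  α.distinguished = {v | (α.sets v ∩ A).Nonempty}

/-- The proper border covers are cofinal in `cov_∞(X,A)`: every border cover
of the closed pair `(X,A)` is refined by a proper border cover. -/
theorem proper_borderCovers_cofinal
    {X : Type*} [TopologicalSpace X] [NormalSpace X] {A : Set X} (hA : IsClosed A)
    (α : BorderCoverPair X A) :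
    ∃ β : BorderCoverPair X A, β.Proper ∧ β.Refines α := by
  classical
  set s : α.ι → Set X := fun v =>
    if v ∈ α.distinguished then α.sets v else α.sets v \ A with hs
  have hsub : ∀ v, s v ⊆ α.sets v := by
    intro v
    by_cases h : v ∈ α.distinguished <;> simp [hs, h, Set.diff_subset]
  refine ⟨⟨α.ι, α.fin, {v | (s v ∩ A).Nonempty}, s, ?_, α.K, α.compact_K, ?_, ?_⟩, ?_, ?_⟩
  · intro v
    by_cases h : v ∈ α.distinguished <;>
      simp only [hs, h, if_true, if_false]
    · exact α.opens v
    · exact (α.opens v).sdiff hA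
  · apply Set.Subset.antisymm
    · intro x hx
      have hxK : x ∉ α.K := hx
      rw [α.compl_K_eq] at hx
      obtain ⟨v, hv⟩ := Set.mem_iUnion.mp hx
      by_cases hxA : x ∈ A
      · have hx' : x ∈ A \ α.K := ⟨hxA, hxK⟩
        obtain ⟨w, hw, hxw⟩ := Set.mem_iUnion₂.mp (α.diff_subset hx')
        exact Set.mem_iUnion.mpr ⟨w, by simp [hs, hw, hxw]⟩
      · by_cases h : v ∈ α.distinguished
        · exact Set.mem_iUnion.mpr ⟨v, by simp [hs, h, hv]⟩
        · exact Set.mem_iUnion.mpr ⟨v, by simp [hs, h, hv, hxA]⟩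
    · intro x hx
      obtain ⟨v, hv⟩ := Set.mem_iUnion.mp hx
      rw [α.compl_K_eq]
      exact Set.mem_iUnion.mpr ⟨v, hsub v hv⟩
  · intro x hx
    obtain ⟨w, hw, hxw⟩ := Set.mem_iUnion₂.mp (α.diff_subset hx)
    have hxs : x ∈ s w := by simp [hs, hw, hxw]
    exact Set.mem_iUnion₂.mpr ⟨w, ⟨x, hxs, hx.1⟩, hxs⟩
  · rfl
  · refine ⟨id, ?_, fun v => hsub v⟩
    intro v hv
    obtain ⟨x, hxs, hxA⟩ := hv
    simp only [id_eq]
    by_contra h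
    simp only [hs, if_neg h] at hxs
    exact hxs.2 hxA
end

section
/- Let X be a normal space, A ⊆ X closed, and U ⊆ X open with closure(U) ⊆ interior(A). Let cov'_∞(X,A) be the set of border covers α of (X,A) such that for every index v, if α_v ∩ U ≠ ∅ then v ∈ V_α^A and α_v ⊆ A. Then cov'_∞(X,A) is cofinal in cov_∞(X,A): every border cover of (X,A) is refined by one in cov'_∞(X,A). -/
/-- Let `X` be normal, `A ⊆ X` closed, and `U ⊆ X` open with
`closure U ⊆ interior A`. The border covers `β` of `(X,A)` such that every member meeting `U`
is distinguished and contained in `A` are cofinal: every border cover of `(X,A)` is refined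
by such a border cover. -/
theorem borderCoverPair_cov'_cofinal
    {X : Type*} [TopologicalSpace X] [NormalSpace X] {A : Set X} (hA : IsClosed A)
    {U : Set X} (hU : IsOpen U) (hUA : closure U ⊆ interior A)
    (α : BorderCoverPair X A) :
    ∃ β : BorderCoverPair X A,
      (∀ v, (β.sets v ∩ U).Nonempty → v ∈ β.distinguished ∧ β.sets v ⊆ A) ∧
      β.Refines α := by
  classical
  have hfin := α.fin
  refine ⟨{
    ι := α.ι ⊕ {v // v ∈ α.distinguished}
    fin := by infer_instance
    distinguished := {w | (∀ v, w = Sum.inl v → v ∈ α.distinguished)}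
    sets := Sum.elim (fun v => α.sets v \ closure U)
      (fun v => α.sets v.1 ∩ interior A)
    opens := by
      rintro (v | v)
      · exact (α.opens v).sdiff isClosed_closure
      · exact (α.opens v.1).inter isOpen_interior
    K := α.K
    compact_K := α.compact_K
    compl_K_eq := by
      apply Set.Subset.antisymm
      · intro x hx
        have hx' : x ∈ ⋃ v, α.sets v := α.compl_K_eq ▸ hx
        obtain ⟨v, hv⟩ := Set.mem_iUnion.mp hx'
        by_cases hcl : x ∈ closure U
        · have hxA : x ∈ A \ α.K := ⟨interior_subset (hUA hcl), hx⟩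
          obtain ⟨w, hw, hxw⟩ := Set.mem_iUnion₂.mp (α.diff_subset hxA)
          exact Set.mem_iUnion.mpr ⟨Sum.inr ⟨w, hw⟩, hxw, hUA hcl⟩
        · exact Set.mem_iUnion.mpr ⟨Sum.inl v, hv, hcl⟩
      · intro x hx
        obtain ⟨w, hw⟩ := Set.mem_iUnion.mp hx
        rw [α.compl_K_eq]
        rcases w with v | v
        · exact Set.mem_iUnion.mpr ⟨v, hw.1⟩
        · exact Set.mem_iUnion.mpr ⟨v.1, hw.1⟩
    diff_subset := by
      intro x hx
      obtain ⟨v, hv, hxv⟩ := Set.mem_iUnion₂.mp (α.diff_subset hx)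
      by_cases hcl : x ∈ closure U
      · refine Set.mem_iUnion₂.mpr ⟨Sum.inr ⟨v, hv⟩, ?_, hxv, hUA hcl⟩
        rintro w ⟨⟩
      · refine Set.mem_iUnion₂.mpr ⟨Sum.inl v, ?_, hxv, hcl⟩
        rintro w hw
        cases hw
        exact hv
  }, ?_, ?_⟩
  · rintro (v | v) ⟨x, hx, hxU⟩
    · exact absurd (subset_closure hxU) hx.2
    · refine ⟨fun w hw => ?_, fun y hy => interior_subset hy.2⟩
      cases hw
  · refine ⟨Sum.elim id Subtype.val, ?_, ?_⟩
    · rintro (v | v) hv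
      · exact hv v rfl
      · exact v.2
    · rintro (v | v)
      · exact fun y hy => hy.1
      · exact fun y hy => hy.1
end

section
/- Let X be a metrizable space with Stone–Čech compactification βX. For every closed subset B of the remainder βX \ X and every open neighborhood U of B in βX \ X, there exists a closed subset A of X such that B ⊆ βA \ A ⊆ U, where βA is identified with the closure of A in βX (so βA \ A = cl_{βX}(A) ∩ (βX \ X)). -/
/-!
Write `B = C ∩ rem` and `U = V ∩ rem` with `C` closed and `V` open in `βX`. Since `B ⊆ U`, the
compact set `K = C \ V` misses the remainder, so it is a compact subset of `X`; metrizability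
gives `K` a countable neighbourhood basis in `X`, which makes `K` a `G_δ` in `βX`. Hence
`βX \ K` is σ-compact and locally compact, so paracompact and normal, and its disjoint closed
subsets `C \ V ⊇ B` and `Vᶜ \ C ⊇ rem \ U` have disjoint open neighbourhoods `W` and `W'`.
Then `A = X ∩ cl W` works: `B ⊆ W ⊆ cl A` by density of `X`, and `cl A ⊆ cl W` misses `W'`.
-/

open TopologicalSpace Set Filter Topology Uniformity

theorem IsCompact.isCountablyGenerated_nhdsSet {X : Type*} [TopologicalSpace X]
    [PseudoMetrizableSpace X] {K : Set X} (hK : IsCompact K) : (𝓝ˢ K).IsCountablyGenerated := by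
  let _ := pseudoMetrizableSpacePseudoMetric X
  obtain ⟨V, hV⟩ := (𝓤 X).exists_antitone_basis
  exact (hK.nhdsSet_basis_uniformity hV.toHasBasis).isCountablyGenerated

theorem Topology.IsInducing.isGδ_image_of_isCompact {X Y : Type*} [TopologicalSpace X]
    [TopologicalSpace Y] [T2Space Y] {e : X → Y} (he : IsInducing e) (hd : DenseRange e)
    {K : Set X} (hK : IsCompact K) [(𝓝ˢ K).IsCountablyGenerated] : IsGδ (e '' K) := by
  obtain ⟨s, hs⟩ := (𝓝ˢ K).exists_antitone_basis
  suffices e '' K = ⋂ n, (closure (e '' (s n)ᶜ))ᶜ from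
    this ▸ IsGδ.iInter_of_isOpen fun n => isClosed_closure.isOpen_compl
  refine Subset.antisymm ?_ fun p hp => ?_
  · rintro _ ⟨x, hx, rfl⟩
    refine mem_iInter.2 fun n hxn => ?_
    rw [← mem_preimage, ← he.closure_eq_preimage_closure_image, closure_compl] at hxn
    exact hxn (mem_interior_iff_mem_nhds.2 (nhds_le_nhdsSet hx (hs.mem n)))
  · by_contra hpK
    obtain ⟨O, N, hO, hN, hKO, hpN, hON⟩ :=
      SeparatedNhds.of_isCompact_isCompact (hK.image he.continuous) isCompact_singleton
        (disjoint_singleton_right.2 hpK)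
    obtain ⟨n, hn⟩ := hs.mem_iff.1 ((hO.preimage he.continuous).mem_nhdsSet.2
      (image_subset_iff.1 hKO))
    refine mem_iInter.1 hp n (closure_mono ?_ (hd.open_subset_closure_inter hN (hpN rfl)))
    rintro _ ⟨hyN, x, rfl⟩
    exact ⟨x, fun hx => hON.ne_of_mem (hn hx) hyN rfl, rfl⟩

theorem IsGδ.isSigmaCompact_compl {X : Type*} [TopologicalSpace X] [CompactSpace X] {s : Set X}
    (hs : IsGδ s) : IsSigmaCompact sᶜ := by
  obtain ⟨t, ht, rfl⟩ := hs.eq_iInter_nat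
  rw [compl_iInter]
  exact isSigmaCompact_iUnion_of_isCompact _ fun n => (ht n).isClosed_compl.isCompact

theorem SeparatedNhds.image_of_isOpenEmbedding {X Y : Type*} [TopologicalSpace X]
    [TopologicalSpace Y] {e : X → Y} (he : IsOpenEmbedding e) {s t : Set X}
    (h : SeparatedNhds s t) : SeparatedNhds (e '' s) (e '' t) := by
  obtain ⟨U, V, hU, hV, hsU, htV, hUV⟩ := h
  exact ⟨e '' U, e '' V, he.isOpenMap U hU, he.isOpenMap V hV, image_mono hsU, image_mono htV,
    (disjoint_image_iff he.injective).2 hUV⟩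

theorem separatedNhds_diff_of_isGδ_inter {X : Type*} [TopologicalSpace X] [CompactSpace X]
    [T2Space X] {C D : Set X} (hC : IsClosed C) (hD : IsClosed D) (hCD : IsGδ (C ∩ D)) :
    SeparatedNhds (C \ D) (D \ C) := by
  set S := (C ∩ D)ᶜ
  have hS : IsOpen S := (hC.inter hD).isOpen_compl
  have : LocallyCompactSpace S := hS.locallyCompactSpace
  have : SigmaCompactSpace S := isSigmaCompact_iff_sigmaCompactSpace.1 hCD.isSigmaCompact_compl
  -- Normality of `S`: locally compact σ-compact T₂ ⇒ paracompact ⇒ normal (Dieudonné).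
  have hsep : SeparatedNhds ((↑) ⁻¹' C : Set S) ((↑) ⁻¹' D) :=
    normal_separation (hC.preimage continuous_subtype_val) (hD.preimage continuous_subtype_val)
      (disjoint_left.2 fun x hxC hxD => x.2 ⟨hxC, hxD⟩)
  convert hsep.image_of_isOpenEmbedding hS.isOpenEmbedding_subtypeVal using 1 <;>
    ext x <;> simp [S] <;> tauto

theorem DenseRange.subset_closure_image_preimage_closure {X Y : Type*} [TopologicalSpace Y]
    {e : X → Y} (hd : DenseRange e) {W : Set Y} (hW : IsOpen W) :
    W ⊆ closure (e '' (e ⁻¹' closure W)) := by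
  rw [image_preimage_eq_inter_range]
  exact (hd.open_subset_closure_inter hW).trans
    (closure_mono (inter_subset_inter_left _ subset_closure))

theorem remainder_closed_sandwich_stoneCech_general
    {X : Type*} [TopologicalSpace X] [MetrizableSpace X]
    (rem : Set (StoneCech X))
    (hrem : rem = (Set.range (stoneCechUnit : X → StoneCech X))ᶜ)
    (B U : Set (StoneCech X))
    (hBclosed : ∃ C : Set (StoneCech X), IsClosed C ∧ B = C ∩ rem)
    (hUopen : ∃ V : Set (StoneCech X), IsOpen V ∧ U = V ∩ rem)
    (hBU : B ⊆ U) :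
    ∃ A : Set X, IsClosed A ∧
      B ⊆ closure (stoneCechUnit '' A) ∩ rem ∧
      closure (stoneCechUnit '' A) ∩ rem ⊆ U := by
  obtain ⟨C, hC, rfl⟩ := hBclosed
  obtain ⟨V, hV, rfl⟩ := hUopen
  have hKX : C ∩ Vᶜ ⊆ range stoneCechUnit := fun p hp =>
    by_contra fun hpX => hp.2 (hBU ⟨hp.1, hrem ▸ hpX⟩).1
  have hK₀ : IsCompact (stoneCechUnit ⁻¹' (C ∩ Vᶜ)) :=
    isInducing_stoneCechUnit.isCompact_preimage' (hC.inter hV.isClosed_compl).isCompact hKX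
  have hKGδ : IsGδ (C ∩ Vᶜ) := by
    have := hK₀.isCountablyGenerated_nhdsSet
    rw [← image_preimage_eq_of_subset hKX]
    exact isInducing_stoneCechUnit.isGδ_image_of_isCompact denseRange_stoneCechUnit hK₀
  obtain ⟨W, W', hW, hW', hCW, hVW', hWW'⟩ :=
    separatedNhds_diff_of_isGδ_inter hC hV.isClosed_compl hKGδ
  refine ⟨stoneCechUnit ⁻¹' closure W, isClosed_closure.preimage continuous_stoneCechUnit,
    fun p hp => ⟨?_, hp.2⟩, ?_⟩
  · exact denseRange_stoneCechUnit.subset_closure_image_preimage_closure hW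
      (hCW ⟨hp.1, not_not.2 (hBU hp).1⟩)
  rintro q ⟨hq, hqrem⟩
  have hqW : q ∈ closure W := closure_minimal (image_preimage_subset _ _) isClosed_closure hq
  refine ⟨by_contra fun hqV => ?_, hqrem⟩
  have hqW' : q ∈ W' := hVW' ⟨hqV, fun hqC => hqV (hBU ⟨hqC, hqrem⟩).1⟩
  exact (hWW'.closure_left hW').ne_of_mem hqW hqW' rfl

/-- Let `X` be metrizable with Stone–Čech compactification `βX` and remainder
`βX \ X` (the complement of the range of `stoneCechUnit`). For every closed subset `B` of the
remainder and every open neighbourhood `U` of `B` in the remainder, there is a closed `A ⊆ X`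
with `B ⊆ βA \ A ⊆ U`, where `βA` is identified with the closure of `A` in `βX`, so that
`βA \ A = cl_{βX}(A) ∩ (βX \ X)`. -/
theorem remainder_closed_sandwich_stoneCech
    {X : Type*} [TopologicalSpace X] [MetrizableSpace X]
    (rem : Set (StoneCech X))
    (hrem : rem = (Set.range (stoneCechUnit : X → StoneCech X))ᶜ)
    (B U : Set (StoneCech X)) (hB : B ⊆ rem) (hU : U ⊆ rem)
    (hBclosed : ∃ C : Set (StoneCech X), IsClosed C ∧ B = C ∩ rem)
    (hUopen : ∃ V : Set (StoneCech X), IsOpen V ∧ U = V ∩ rem)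
    (hBU : B ⊆ U) :
    ∃ A : Set X, IsClosed A ∧
      B ⊆ closure (stoneCechUnit '' A) ∩ rem ∧
      closure (stoneCechUnit '' A) ∩ rem ⊆ U :=
  remainder_closed_sandwich_stoneCech_general rem hrem B U hBclosed hUopen hBU
end

section
/- Let Y be a compact Hausdorff (or normal) space and let α = {α_v}_{v∈V} and α' = {α'_w}_{w∈W} be finite closed covers of Y with α refining α' via a projection p : V → W (α_v ⊆ α'_{p(v)}). Then there exist open swellings β = {β_v}_{v∈V} and β' = {β'_w}_{w∈W} (open sets with α_v ⊆ β_v, α'_w ⊆ β'_w, having the same nerve as α, α' respectively, i.e., any subfamily of the swelling has nonempty intersection iff the corresponding subfamily of the original does) such that β_v ⊆ β'_{p(v)} for all v ∈ V. -/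
/-!
The subfamilies with empty intersection are the only constraint on a swelling. For each
subfamily `S` of `α` with empty intersection, the complements of its members form a finite
open cover, and the shrinking lemma turns it into open neighbourhoods of those members that
still have empty intersection. Intersecting, for each `v`, the neighbourhoods chosen for all
such `S ∋ v` gives a swelling `β₁` of `α`. With `β'` a swelling of `α'`, the family
`β₁ v ∩ β' (p v)` is still a swelling of `α`, because it lies between `α` and `β₁`.
-/

open Set

section

variable {Y : Type*} [TopologicalSpace Y]

structure IsSwelling {V : Type*} (α β : V → Set Y) : Prop where
  isOpen : ∀ v, IsOpen (β v)
  subset : ∀ v, α v ⊆ β v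
  nonempty_iff : ∀ S : Set V, (⋂ v ∈ S, β v).Nonempty ↔ (⋂ v ∈ S, α v).Nonempty

theorem IsSwelling.inter {V : Type*} {α β γ : V → Set Y} (hβ : IsSwelling α β)
    (hγ : ∀ v, IsOpen (γ v)) (hαγ : ∀ v, α v ⊆ γ v) :
    IsSwelling α (fun v => β v ∩ γ v) where
  isOpen v := (hβ.isOpen v).inter (hγ v)
  subset v := subset_inter (hβ.subset v) (hαγ v)
  nonempty_iff S :=
    ⟨fun h => (hβ.nonempty_iff S).1 <|
        h.mono <| biInter_mono subset_rfl fun _ _ => inter_subset_left,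
      fun h => h.mono <| biInter_mono subset_rfl fun v _ => subset_inter (hβ.subset v) (hαγ v)⟩

theorem exists_open_superset_iInter_eq_empty [NormalSpace Y] {ι : Type*} [Finite ι]
    {A : ι → Set Y} (hA : ∀ i, IsClosed (A i)) (hempty : ⋂ i, A i = ∅) :
    ∃ U : ι → Set Y, (∀ i, IsOpen (U i)) ∧ (∀ i, A i ⊆ U i) ∧ ⋂ i, U i = ∅ := by
  have hcover : ⋃ i, (A i)ᶜ = univ := by rw [← compl_iInter, hempty, compl_empty]
  obtain ⟨C, hCcover, -, hCA⟩ := exists_iUnion_eq_closure_subset (fun i => (hA i).isOpen_compl)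
    (fun _ => toFinite _) hcover
  refine ⟨fun i => (closure (C i))ᶜ, fun _ => isClosed_closure.isOpen_compl,
    fun i => subset_compl_comm.1 (hCA i), ?_⟩
  rw [← compl_iUnion, compl_empty_iff, ← univ_subset_iff, ← hCcover]
  exact iUnion_mono fun _ => subset_closure

theorem exists_isSwelling [NormalSpace Y] {V : Type*} [Finite V] (α : V → Set Y)
    (hα : ∀ v, IsClosed (α v)) : ∃ β, IsSwelling α β := by
  have hnbhd (S : Set V) (hS : ⋂ v ∈ S, α v = ∅) : ∃ U : S → Set Y,
      (∀ v, IsOpen (U v)) ∧ (∀ v : S, α v ⊆ U v) ∧ ⋂ v, U v = ∅ :=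
    exists_open_superset_iInter_eq_empty (fun v => hα v) (by rwa [biInter_eq_iInter] at hS)
  choose U hUopen hαU hUempty using hnbhd
  set β : V → Set Y := fun v => ⋂ (S) (hS) (hv : v ∈ S), U S hS ⟨v, hv⟩
  have hαβ (v : V) : α v ⊆ β v :=
    subset_iInter fun S => subset_iInter fun hS => subset_iInter fun hv => hαU S hS ⟨v, hv⟩
  refine ⟨β, ⟨fun v => ?_, hαβ, fun S => ⟨fun ⟨x, hx⟩ => ?_, fun h => ?_⟩⟩⟩
  · exact isOpen_iInter_of_finite fun S => isOpen_iInter_of_finite fun hS =>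
      isOpen_iInter_of_finite fun hv => hUopen S hS ⟨v, hv⟩
  · rw [nonempty_iff_ne_empty]
    intro hS
    have hx : x ∈ ⋂ v, U S hS v := mem_iInter.2 fun v => by
      simp only [β, mem_iInter] at hx
      exact hx v v.2 S hS v.2
    rwa [hUempty S hS] at hx
  · exact h.mono <| biInter_mono subset_rfl fun v _ => hαβ v

end

theorem swelling_compatible_with_refinement_general
    {Y : Type*} [TopologicalSpace Y] [NormalSpace Y]
    {V W : Type*} [Finite V] [Finite W]
    (α : V → Set Y) (α' : W → Set Y)
    (hα : ∀ v, IsClosed (α v)) (hα' : ∀ w, IsClosed (α' w))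
    (p : V → W) (hp : ∀ v, α v ⊆ α' (p v)) :
    ∃ (β : V → Set Y) (β' : W → Set Y),
      (∀ v, IsOpen (β v)) ∧ (∀ v, α v ⊆ β v) ∧
      (∀ S : Set V, (⋂ v ∈ S, β v).Nonempty ↔ (⋂ v ∈ S, α v).Nonempty) ∧
      (∀ w, IsOpen (β' w)) ∧ (∀ w, α' w ⊆ β' w) ∧
      (∀ T : Set W, (⋂ w ∈ T, β' w).Nonempty ↔ (⋂ w ∈ T, α' w).Nonempty) ∧
      (∀ v, β v ⊆ β' (p v)) := by
  obtain ⟨β', hβ'⟩ := exists_isSwelling α' hα'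
  obtain ⟨β₁, hβ₁⟩ := exists_isSwelling α hα
  have hβ := hβ₁.inter (fun v => hβ'.isOpen (p v)) fun v => (hp v).trans (hβ'.subset (p v))
  exact ⟨_, β', hβ.isOpen, hβ.subset, hβ.nonempty_iff, hβ'.isOpen, hβ'.subset, hβ'.nonempty_iff,
    fun _ => inter_subset_right⟩

/-- Let `Y` be a normal space, and let `α`, `α'` be finite closed covers of
`Y` such that `α` refines `α'` via a projection `p` (`α v ⊆ α' (p v)`). Then there exist open
swellings `β` of `α` and `β'` of `α'` (open families containing the closed ones member-wise and
having the same nerve: a subfamily of the swelling has nonempty intersection iff the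
corresponding closed subfamily does) such that `β v ⊆ β' (p v)` for all `v`. -/
theorem swelling_compatible_with_refinement
    {Y : Type*} [TopologicalSpace Y] [NormalSpace Y]
    {V W : Type*} [Finite V] [Finite W]
    (α : V → Set Y) (α' : W → Set Y)
    (hα : ∀ v, IsClosed (α v)) (hα' : ∀ w, IsClosed (α' w))
    (hαcov : (⋃ v, α v) = Set.univ) (hα'cov : (⋃ w, α' w) = Set.univ)
    (p : V → W) (hp : ∀ v, α v ⊆ α' (p v)) :
    ∃ (β : V → Set Y) (β' : W → Set Y),
      (∀ v, IsOpen (β v)) ∧ (∀ v, α v ⊆ β v) ∧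
      (∀ S : Set V, (⋂ v ∈ S, β v).Nonempty ↔ (⋂ v ∈ S, α v).Nonempty) ∧
      (∀ w, IsOpen (β' w)) ∧ (∀ w, α' w ⊆ β' w) ∧
      (∀ T : Set W, (⋂ w ∈ T, β' w).Nonempty ↔ (⋂ w ∈ T, α' w).Nonempty) ∧
      (∀ v, β v ⊆ β' (p v)) :=
  swelling_compatible_with_refinement_general α α' hα hα' p hp
end

section
/- Let X be a normal space and {α_v}_{v∈V} a finite closed family in X. Then there exists an open family {β_v}_{v∈V} with α_v ⊆ β_v for each v, such that for every subset S ⊆ V, ⋂_{v∈S} β_v ≠ ∅ if and only if ⋂_{v∈S} α_v ≠ ∅ (an open swelling preserving the nerve). -/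
/-- the swelling lemma. Let `X` be a normal space and `{α v}` a finite
closed family in `X`. Then there is an open family `{β v}` with `α v ⊆ β v` for each `v`,
such that for every subset `S` of the index set, `⋂ v ∈ S, β v` is nonempty iff
`⋂ v ∈ S, α v` is nonempty (an open swelling preserving the nerve). -/
theorem swelling_of_finite_closed_family
    {X : Type*} [TopologicalSpace X] [NormalSpace X]
    {V : Type*} [Finite V] (α : V → Set X) (hα : ∀ v, IsClosed (α v)) :
    ∃ β : V → Set X,
      (∀ v, IsOpen (β v)) ∧ (∀ v, α v ⊆ β v) ∧
      (∀ S : Set V, (⋂ v ∈ S, β v).Nonempty ↔ (⋂ v ∈ S, α v).Nonempty) := by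
  classical
  have : Fintype V := Fintype.ofFinite V
  have key : ∀ F : Finset V, ∃ γ : V → Set X,
      (∀ v ∈ F, IsOpen (γ v)) ∧ (∀ v ∉ F, γ v = α v) ∧ (∀ v, α v ⊆ γ v) ∧
      (∀ S : Set V, (⋂ v ∈ S, closure (γ v)).Nonempty ↔ (⋂ v ∈ S, α v).Nonempty) := by
    intro F
    induction F using Finset.induction with
    | empty =>
        refine ⟨α, by simp, fun v _ => rfl, fun v => subset_rfl, fun S => ?_⟩
        have h : ∀ v, closure (α v) = α v := fun v => (hα v).closure_eq
        simp only [h]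
    | @insert v₀ F hv₀ ih =>
        obtain ⟨γ, hγo, hγe, hγs, hγn⟩ := ih
        set T : Set V → Set X := fun S => ⋂ v ∈ S, closure (γ v) with hT
        have hTclosed : ∀ S, IsClosed (T S) := fun S =>
          isClosed_biInter fun v _ => isClosed_closure
        set B : Set X := ⋃ S : Set V, (if α v₀ ∩ T S = ∅ then T S else ∅) with hB
        have hBclosed : IsClosed B := by
          apply isClosed_iUnion_of_finite
          intro S
          by_cases h : α v₀ ∩ T S = ∅ <;> simp [h, hTclosed, isClosed_empty]
        have hsub : α v₀ ⊆ Bᶜ := by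
          intro x hx hxB
          rw [hB, Set.mem_iUnion] at hxB
          obtain ⟨S, hS⟩ := hxB
          by_cases h : α v₀ ∩ T S = ∅
          · rw [if_pos h] at hS
            exact absurd (Set.mem_inter hx hS) (by rw [h]; exact id)
          · rw [if_neg h] at hS; exact hS
        obtain ⟨U, hUo, hU1, hU2⟩ :=
          normal_exists_closure_subset (hα v₀) hBclosed.isOpen_compl hsub
        refine ⟨Function.update γ v₀ U, ?_, ?_, ?_, ?_⟩
        · intro v hv
          rcases Finset.mem_insert.mp hv with rfl | hvF
          · rw [Function.update_self]; exact hUo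
          · rw [Function.update_of_ne (by rintro rfl; exact hv₀ hvF)]
            exact hγo v hvF
        · intro v hv
          have h1 : v ≠ v₀ := fun h => hv (h ▸ Finset.mem_insert_self v₀ F)
          have h2 : v ∉ F := fun h => hv (Finset.mem_insert_of_mem h)
          rw [Function.update_of_ne h1]; exact hγe v h2
        · intro v
          by_cases h : v = v₀
          · subst h; rw [Function.update_self]; exact hU1
          · rw [Function.update_of_ne h]; exact hγs v
        · intro S
          by_cases hvS : v₀ ∈ S
          · constructor
            · rintro ⟨x, hx⟩
              by_contra hne
              rw [Set.not_nonempty_iff_eq_empty] at hne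
              have hTe : ⋂ v ∈ S, closure (γ v) = ∅ :=
                Set.not_nonempty_iff_eq_empty.mp fun h =>
                  Set.not_nonempty_iff_eq_empty.mpr hne ((hγn S).mp h)
              -- show α v₀ ∩ T (S \ {v₀}) = ∅
              have hins : insert v₀ (S \ {v₀}) = S := by
                rw [Set.insert_diff_singleton, Set.insert_eq_self.mpr hvS]
              have hγv₀ : closure (γ v₀) = α v₀ := by
                rw [hγe v₀ hv₀, (hα v₀).closure_eq]
              have hsplit : α v₀ ∩ T (S \ {v₀}) = ∅ := by
                rw [hT]
                calc α v₀ ∩ ⋂ v ∈ S \ {v₀}, closure (γ v)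
                    = ⋂ v ∈ insert v₀ (S \ {v₀}), closure (γ v) := by
                      rw [Set.biInter_insert, hγv₀]
                  _ = ∅ := by rw [hins]; exact hTe
              have hTB : T (S \ {v₀}) ⊆ B := by
                intro y hy
                rw [hB, Set.mem_iUnion]
                exact ⟨S \ {v₀}, by rw [if_pos hsplit]; exact hy⟩
              -- x is in closure U and in T (S \ {v₀})
              have hxU : x ∈ closure U := by
                have hx₀ := Set.mem_iInter₂.mp hx v₀ hvS
                rwa [Function.update_self] at hx₀
              have hxT : x ∈ T (S \ {v₀}) := by
                rw [hT]
                refine Set.mem_iInter₂.mpr fun v hv => ?_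
                have hne' : v ≠ v₀ := hv.2
                have := Set.mem_iInter₂.mp hx v hv.1
                rwa [Function.update_of_ne hne'] at this
              exact (hU2 hxU) (hTB hxT)
            · rintro ⟨x, hx⟩
              refine ⟨x, Set.mem_iInter₂.mpr fun v hv => ?_⟩
              by_cases h : v = v₀
              · subst h; rw [Function.update_self]
                exact subset_closure (hU1 (Set.mem_iInter₂.mp hx v hv))
              · rw [Function.update_of_ne h]
                exact subset_closure (hγs v (Set.mem_iInter₂.mp hx v hv))
          · have heq : (⋂ v ∈ S, closure (Function.update γ v₀ U v)) =
                ⋂ v ∈ S, closure (γ v) := by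
              refine Set.iInter₂_congr fun v hv => ?_
              rw [Function.update_of_ne (by rintro rfl; exact hvS hv)]
            rw [heq]; exact hγn S
  obtain ⟨γ, hγo, _, hγs, hγn⟩ := key Finset.univ
  refine ⟨γ, fun v => hγo v (Finset.mem_univ v), hγs, fun S => ?_⟩
  constructor
  · rintro ⟨x, hx⟩
    refine (hγn S).mp ⟨x, Set.mem_iInter₂.mpr fun v hv =>
      subset_closure (Set.mem_iInter₂.mp hx v hv)⟩
  · rintro ⟨x, hx⟩
    exact ⟨x, Set.mem_iInter₂.mpr fun v hv => hγs v (Set.mem_iInter₂.mp hx v hv)⟩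
end
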